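/- For every natural number n, the number of permutations of length n in the juxtaposition class Av(231|21) equals the number of permutations of length n in the juxtaposition class Av(321|21). (There is a bijection ψ : Av(231|21) → Av(321|21).) -/

import Mathlib

/-- `σ` contains an occurrence of the pattern `π` using only positions in `S`. -/
def ContainsIn {n m : ℕ} (σ : Equiv.Perm (Fin n)) (π : Equiv.Perm (Fin m))
    (S : Set (Fin n)) : Prop :=
  ∃ f : Fin m → Fin n, StrictMono f ∧ (∀ s, f s ∈ S) ∧
    ∀ s t : Fin m, σ (f s) < σ (f t) ↔ π s < π t

/-- `σ` contains an occurrence of the pattern `π`. -/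
def Contains {n m : ℕ} (σ : Equiv.Perm (Fin n)) (π : Equiv.Perm (Fin m)) : Prop :=
  ContainsIn σ π Set.univ

/-- `σ` avoids the pattern `π`. -/
def Avoids {n m : ℕ} (σ : Equiv.Perm (Fin n)) (π : Equiv.Perm (Fin m)) : Prop :=
  ¬ Contains σ π

/-- `σ` lies in the juxtaposition class `Av(P|Q)`: positions split at some cut `k`
(`0 ≤ k ≤ n`), no occurrence of `P` within the first `k` positions and no occurrence
of `Q` within the remaining positions. -/
def JuxtAv {n p q : ℕ} (P : Equiv.Perm (Fin p)) (Q : Equiv.Perm (Fin q))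
    (σ : Equiv.Perm (Fin n)) : Prop :=
  ∃ k ≤ n, ¬ ContainsIn σ P {i : Fin n | (i : ℕ) < k} ∧
    ¬ ContainsIn σ Q {i : Fin n | k ≤ (i : ℕ)}

noncomputable def p231 : Equiv.Perm (Fin 3) :=
  Equiv.ofBijective (![1,2,0] : Fin 3 → Fin 3) (by decide)

noncomputable def p321 : Equiv.Perm (Fin 3) :=
  Equiv.ofBijective (![2,1,0] : Fin 3 → Fin 3) (by decide)

noncomputable def p21 : Equiv.Perm (Fin 2) :=
  Equiv.ofBijective (![1,0] : Fin 2 → Fin 2) (by decide)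

/-!
Appending a last value `v` to a permutation `w` of length `k` enumerates the
permutations of length `k + 1` exactly once. A permutation lies in `Av(P|21)` iff it is a
`P`-avoiding prefix followed by an increasing suffix. Appending `v` keeps such a cut when `v`
exceeds the old last entry; otherwise every cut leaves all of `w` in the prefix, so `w` itself
must avoid `P`. Counted by last value, `Av(P|21)` therefore obeys a recursion whose
only other input is the number of `P`-avoiders with a given last value, so it suffices to match
these for `P = 231` and `P = 321`.

Appending `v` to a `231`-avoider keeps it `231`-avoiding iff all ascent bottoms (smaller entries of
non-inversions) are below `v`; for `321` the same holds with inversion bottoms. Refining the count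
of avoiders by this threshold, both refined counts `c` satisfy
`c (k + 1) m = ∑_{v ≤ min m k} c k v`, and so they coincide.
-/

open Equiv Finset

lemma Nat.card_subtype_eq_sum_card_fiber {α β : Type*} [Fintype α] [Fintype β]
    (p : α → Prop) (f : α → β) :
    Nat.card {a // p a} = ∑ b, Nat.card {a // p a ∧ f a = b} := by
  rw [← Nat.card_congr (Equiv.sigmaFiberEquiv fun a : {a // p a} => f a), Nat.card_sigma]
  exact Finset.sum_congr rfl fun b _ =>
    Nat.card_congr (Equiv.subtypeSubtypeEquivSubtypeInter p (fun a => f a = b))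

lemma sum_range_succ_ite_le {g : ℕ → ℕ} {k m : ℕ} (hg : k ≤ m → g m = g k) :
    ∑ v ∈ range (k + 1), (if v ≤ m then g v else 0) =
      g m + ∑ v ∈ range k, (if v < m then g v else 0) := by
  rw [sum_range_succ]
  by_cases hkm : k ≤ m
  · rw [if_pos hkm, ← hg hkm, add_comm]
    refine congrArg (g m + ·) (sum_congr rfl fun v hv => ?_)
    have := mem_range.1 hv
    rw [if_pos (by omega), if_pos (by omega)]
  · have hsplit : ∀ v, (if v ≤ m then g v else 0) =
        (if v < m then g v else 0) + if v = m then g v else 0 := fun v => by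
      by_cases h : v < m
      · rw [if_pos h.le, if_pos h, if_neg h.ne, add_zero]
      · by_cases h' : v = m <;> simp [h, h', le_iff_lt_or_eq]
    rw [if_neg hkm, add_zero, sum_congr rfl fun v _ => hsplit v, sum_add_distrib,
      sum_ite_eq', if_pos (mem_range.2 (by omega)), add_comm]

lemma exists_lt_lt_fin_succ_iff {k : ℕ}
    {R : Fin (k + 1) → Fin (k + 1) → Fin (k + 1) → Prop} :
    (∃ a b c, a < b ∧ b < c ∧ R a b c) ↔
      (∃ a b c : Fin k, a < b ∧ b < c ∧ R a.castSucc b.castSucc c.castSucc) ∨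
        ∃ a b : Fin k, a < b ∧ R a.castSucc b.castSucc (Fin.last k) := by
  constructor
  · rintro ⟨a, b, c, hab, hbc, hR⟩
    obtain ⟨b, rfl⟩ := Fin.exists_castSucc_eq.2 (Fin.ne_last_of_lt hbc)
    obtain ⟨a, rfl⟩ := Fin.exists_castSucc_eq.2 (Fin.ne_last_of_lt hab)
    obtain ⟨c, rfl⟩ | rfl := Fin.eq_castSucc_or_eq_last c
    · exact Or.inl ⟨a, b, c, Fin.castSucc_lt_castSucc_iff.1 hab,
        Fin.castSucc_lt_castSucc_iff.1 hbc, hR⟩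
    · exact Or.inr ⟨a, b, Fin.castSucc_lt_castSucc_iff.1 hab, hR⟩
  · rintro (⟨a, b, c, hab, hbc, hR⟩ | ⟨a, b, hab, hR⟩)
    · exact ⟨_, _, _, Fin.castSucc_lt_castSucc_iff.2 hab, Fin.castSucc_lt_castSucc_iff.2 hbc,
        hR⟩
    · exact ⟨_, _, _, Fin.castSucc_lt_castSucc_iff.2 hab, Fin.castSucc_lt_last b, hR⟩

lemma strictMono_vecCons3 {n : ℕ} {a b c : Fin n} (hab : a < b) (hbc : b < c) :
    StrictMono ![a, b, c] :=
  Fin.strictMono_iff_lt_succ.2 fun i => by fin_cases i; exacts [hab, hbc]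

section Patterns

variable {n m : ℕ}

lemma containsIn_mono {σ : Perm (Fin n)} {π : Perm (Fin m)} {S T : Set (Fin n)}
    (h : ContainsIn σ π S) (hST : S ⊆ T) : ContainsIn σ π T :=
  let ⟨f, hf, hS, hπ⟩ := h
  ⟨f, hf, fun s => hST (hS s), hπ⟩

lemma avoids_of_lt {σ : Perm (Fin n)} {π : Perm (Fin m)} (h : n < m) : Avoids σ π :=
  fun ⟨f, hf, _⟩ => h.not_ge (Fin.le_of_injective f hf.injective)

lemma avoids_iff_not_containsIn_lt {σ : Perm (Fin n)} {π : Perm (Fin m)} :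
    Avoids σ π ↔ ¬ContainsIn σ π {i | (i : ℕ) < n} := by
  have : {i : Fin n | (i : ℕ) < n} = Set.univ := Set.eq_univ_of_forall Fin.is_lt
  rw [Avoids, Contains, this]

lemma containsIn_iff_lt_imp_lt {σ : Perm (Fin n)} {π : Perm (Fin m)} {S : Set (Fin n)} :
    ContainsIn σ π S ↔ ∃ f : Fin m → Fin n, StrictMono f ∧ (∀ s, f s ∈ S) ∧
      ∀ s t, π s < π t → σ (f s) < σ (f t) := by
  refine ⟨fun ⟨f, hf, hS, hπ⟩ => ⟨f, hf, hS, fun s t => (hπ s t).2⟩,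
    fun ⟨f, hf, hS, hπ⟩ => ⟨f, hf, hS, fun s t => ⟨fun h => ?_, hπ s t⟩⟩⟩
  rcases lt_trichotomy (π s) (π t) with hst | hst | hst
  · exact hst
  · cases h.ne (congrArg (σ ∘ f) (π.injective hst))
  · exact absurd (hπ t s hst) h.not_gt

lemma containsIn_p21_iff {σ : Perm (Fin n)} {S : Set (Fin n)} :
    ContainsIn σ p21 S ↔ ∃ a b, a < b ∧ a ∈ S ∧ b ∈ S ∧ σ b < σ a := by
  rw [containsIn_iff_lt_imp_lt]
  constructor
  · rintro ⟨f, hf, hS, hπ⟩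
    exact ⟨f 0, f 1, hf (by decide), hS 0, hS 1, hπ 1 0 (by decide)⟩
  · rintro ⟨a, b, hab, ha, hb, hσ⟩
    refine ⟨![a, b], Fin.strictMono_iff_lt_succ.2 fun i => ?_, fun s => ?_, fun s t hst => ?_⟩
    · fin_cases i; exact hab
    · fin_cases s <;> assumption
    · fin_cases s <;> fin_cases t <;> first | exact hσ | exact absurd hst (by decide)

lemma contains_p231_iff {σ : Perm (Fin n)} :
    Contains σ p231 ↔ ∃ a b c, a < b ∧ b < c ∧ σ c < σ a ∧ σ a < σ b := by
  rw [Contains, containsIn_iff_lt_imp_lt]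
  constructor
  · rintro ⟨f, hf, -, hπ⟩
    exact ⟨f 0, f 1, f 2, hf (by decide), hf (by decide), hπ 2 0 (by decide),
      hπ 0 1 (by decide)⟩
  · rintro ⟨a, b, c, hab, hbc, hca, hab'⟩
    refine ⟨![a, b, c], strictMono_vecCons3 hab hbc, fun _ => trivial, fun s t hst => ?_⟩
    fin_cases s <;> fin_cases t <;>
      first | exact absurd hst (by decide) | exact hca | exact hab' | exact hca.trans hab'

lemma contains_p321_iff {σ : Perm (Fin n)} :
    Contains σ p321 ↔ ∃ a b c, a < b ∧ b < c ∧ σ b < σ a ∧ σ c < σ b := by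
  rw [Contains, containsIn_iff_lt_imp_lt]
  constructor
  · rintro ⟨f, hf, -, hπ⟩
    exact ⟨f 0, f 1, f 2, hf (by decide), hf (by decide), hπ 1 0 (by decide),
      hπ 2 1 (by decide)⟩
  · rintro ⟨a, b, c, hab, hbc, hba, hcb⟩
    refine ⟨![a, b, c], strictMono_vecCons3 hab hbc, fun _ => trivial, fun s t hst => ?_⟩
    fin_cases s <;> fin_cases t <;>
      first | exact absurd hst (by decide) | exact hba | exact hcb | exact hcb.trans hba

end Patterns

section AppendLast

variable {k p : ℕ}

/-- `w` with the value `v` appended: the first `k` entries keep the relative order of `w`,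
shifted past `v`. -/
noncomputable def appendLast (w : Perm (Fin k)) (v : Fin (k + 1)) : Perm (Fin (k + 1)) :=
  Equiv.ofBijective (Fin.snoc (fun i => v.succAbove (w i)) v : Fin (k + 1) → Fin (k + 1)) <|
    Finite.injective_iff_bijective.1 <| Fin.snoc_injective_iff.2
      ⟨Fin.succAbove_right_injective.comp w.injective,
        fun ⟨i, hi⟩ => Fin.succAbove_ne v (w i) hi⟩

@[simp]
lemma appendLast_castSucc (w : Perm (Fin k)) (v : Fin (k + 1)) (i : Fin k) :
    appendLast w v i.castSucc = v.succAbove (w i) := by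
  simp [appendLast]

@[simp]
lemma appendLast_last (w : Perm (Fin k)) (v : Fin (k + 1)) : appendLast w v (Fin.last k) = v := by
  simp [appendLast]

lemma appendLast_bijective :
    Function.Bijective (fun p : Perm (Fin k) × Fin (k + 1) => appendLast p.1 p.2) := by
  refine (Fintype.bijective_iff_injective_and_card _).2 ⟨?_, ?_⟩
  · rintro ⟨w, v⟩ ⟨w', v'⟩ h
    have hv : v = v' := by simpa using congrArg (· (Fin.last k)) h
    subst hv
    have hw : w = w' := Equiv.ext fun i => by simpa using congrArg (· i.castSucc) h
    rw [hw]
  · simp [Fintype.card_perm, Nat.factorial_succ, mul_comm]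

lemma card_subtype_perm_last_eq (Q : Perm (Fin (k + 1)) → Prop) (v : Fin (k + 1)) :
    Nat.card {σ : Perm (Fin (k + 1)) // Q σ ∧ σ (Fin.last k) = v} =
      Nat.card {w : Perm (Fin k) // Q (appendLast w v)} := by
  refine (Nat.card_congr (Equiv.ofBijective
    (fun w => ⟨appendLast w.1 v, w.2, appendLast_last _ _⟩) ⟨?_, ?_⟩)).symm
  · rintro ⟨w, _⟩ ⟨w', _⟩ h
    exact Subtype.ext (congrArg Prod.fst
      (appendLast_bijective.1 (a₁ := (w, v)) (a₂ := (w', v)) (congrArg Subtype.val h)))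
  · rintro ⟨σ, hQ, rfl⟩
    obtain ⟨⟨w, v⟩, rfl⟩ := appendLast_bijective.2 σ
    exact ⟨⟨w, by simpa using hQ⟩, by simp⟩

lemma card_subtype_perm_succ {k : ℕ} (Q : Perm (Fin (k + 1)) → Prop) :
    Nat.card {σ : Perm (Fin (k + 1)) // Q σ} =
      ∑ v, Nat.card {w : Perm (Fin k) // Q (appendLast w v)} := by
  rw [Nat.card_subtype_eq_sum_card_fiber Q (· (Fin.last k))]
  exact Finset.sum_congr rfl fun v _ => card_subtype_perm_last_eq Q v

lemma exists_lt_last_appendLast_eq {w : Perm (Fin k)} {v u : Fin (k + 1)} (hu : u ≠ v) :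
    ∃ i, i < Fin.last k ∧ appendLast w v i = u := by
  refine ⟨(appendLast w v).symm u, lt_of_le_of_ne (Fin.le_last _) fun h => hu ?_, by simp⟩
  rw [← appendLast_last w v, ← h, Equiv.apply_symm_apply]

lemma containsIn_appendLast_iff {w : Perm (Fin k)} {v : Fin (k + 1)} {π : Perm (Fin p)} {c : ℕ}
    (hc : c ≤ k) :
    ContainsIn (appendLast w v) π {i | (i : ℕ) < c} ↔ ContainsIn w π {i | (i : ℕ) < c} := by
  constructor
  · rintro ⟨f, hf, hS, hπ⟩
    have hk : ∀ s, (f s : ℕ) < k := fun s => (hS s).trans_le hc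
    refine ⟨fun s => ⟨f s, hk s⟩, fun s t hst => hf hst, hS, fun s t => ?_⟩
    have e : ∀ s, appendLast w v (f s) = v.succAbove (w ⟨f s, hk s⟩) := fun s =>
      appendLast_castSucc w v ⟨f s, hk s⟩
    rw [← hπ, e, e, Fin.succAbove_lt_succAbove_iff]
  · rintro ⟨f, hf, hS, hπ⟩
    refine ⟨fun s => (f s).castSucc, Fin.strictMono_castSucc.comp hf, hS, fun s t => ?_⟩
    simp [hπ]

end AppendLast

section Juxtaposition

variable {n k p : ℕ}

def IncreasingFrom (σ : Perm (Fin n)) (c : ℕ) : Prop :=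
  ∀ i j : Fin n, c ≤ (i : ℕ) → i < j → σ i < σ j

lemma not_containsIn_p21_iff {σ : Perm (Fin n)} {c : ℕ} :
    ¬ContainsIn σ p21 {i | c ≤ (i : ℕ)} ↔ IncreasingFrom σ c := by
  simp only [containsIn_p21_iff, Set.mem_ofPred_eq, not_exists, not_and, not_lt]
  refine ⟨fun h i j hi hij => ?_, fun h i j hij hi _ => (h i j hi hij).le⟩
  exact (h i j hij hi (hi.trans (Fin.le_iff_val_le_val.1 hij.le))).lt_of_ne
    (σ.injective.ne hij.ne)

lemma increasingFrom_of_le_succ (σ : Perm (Fin n)) {c : ℕ} (h : n ≤ c + 1) :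
    IncreasingFrom σ c := fun i j hi hij => by
  have := j.isLt; have : (i : ℕ) < j := hij; omega

lemma increasingFrom_appendLast_iff {w : Perm (Fin (k + 1))} {v : Fin (k + 2)} {c : ℕ}
    (hc : c ≤ k) :
    IncreasingFrom (appendLast w v) c ↔ IncreasingFrom w c ∧ (w (Fin.last k) : ℕ) < v := by
  constructor
  · intro h
    refine ⟨fun i j hi hij => ?_, ?_⟩
    · simpa using h i.castSucc j.castSucc hi (Fin.castSucc_lt_castSucc_iff.2 hij)
    · have := h (Fin.last k).castSucc (Fin.last (k + 1)) (by simpa using hc)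
        (Fin.castSucc_lt_last _)
      rw [appendLast_castSucc, appendLast_last, Fin.succAbove_lt_iff_castSucc_lt] at this
      exact Fin.lt_def.1 this
  · rintro ⟨hw, hv⟩ i j hi hij
    obtain ⟨i, rfl⟩ := Fin.exists_castSucc_eq.2 (Fin.ne_last_of_lt hij)
    obtain ⟨j, rfl⟩ | rfl := Fin.eq_castSucc_or_eq_last j
    · simpa using hw i j hi (Fin.castSucc_lt_castSucc_iff.1 hij)
    · have hle : w i ≤ w (Fin.last k) := by
        rcases (Fin.le_last i).lt_or_eq with hlt | rfl
        exacts [(hw i _ hi hlt).le, le_rfl]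
      rw [appendLast_castSucc, appendLast_last, Fin.succAbove_lt_iff_castSucc_lt, Fin.lt_def]
      exact (Fin.le_def.1 hle).trans_lt hv

lemma juxtAv_of_avoids {σ : Perm (Fin n)} {P : Perm (Fin p)} (h : Avoids σ P) :
    JuxtAv P p21 σ :=
  ⟨n, le_rfl, avoids_iff_not_containsIn_lt.1 h,
    not_containsIn_p21_iff.2 (increasingFrom_of_le_succ σ (Nat.le_succ n))⟩

lemma juxtAv_of_lt {σ : Perm (Fin n)} {P : Perm (Fin p)} (h : n < p) : JuxtAv P p21 σ :=
  juxtAv_of_avoids (avoids_of_lt h)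

lemma juxtAv_appendLast_of_avoids {w : Perm (Fin k)} {v : Fin (k + 1)} {P : Perm (Fin p)}
    (h : Avoids w P) : JuxtAv P p21 (appendLast w v) :=
  ⟨k, k.le_succ, (containsIn_appendLast_iff le_rfl).not.2 (avoids_iff_not_containsIn_lt.1 h),
    not_containsIn_p21_iff.2 (increasingFrom_of_le_succ _ le_rfl)⟩

lemma juxtAv_appendLast_iff {w : Perm (Fin (k + 1))} {v : Fin (k + 2)} {P : Perm (Fin p)} :
    JuxtAv P p21 (appendLast w v) ↔
      (w (Fin.last k) : ℕ) < v ∧ JuxtAv P p21 w ∨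
        (v : ℕ) ≤ w (Fin.last k) ∧ Avoids w P := by
  constructor
  · rintro ⟨c, hc, hpre, hsuf⟩
    rw [not_containsIn_p21_iff] at hsuf
    rcases le_or_gt c k with hck | hkc
    · rw [containsIn_appendLast_iff (hck.trans k.le_succ)] at hpre
      rw [increasingFrom_appendLast_iff hck] at hsuf
      exact Or.inl ⟨hsuf.2, c, hck.trans k.le_succ, hpre, not_containsIn_p21_iff.2 hsuf.1⟩
    · have hav : Avoids w P := avoids_iff_not_containsIn_lt.2 fun h =>
        hpre (containsIn_mono ((containsIn_appendLast_iff le_rfl).2 h)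
          fun i (hi : (i : ℕ) < k + 1) => show (i : ℕ) < c by omega)
      rcases lt_or_ge (w (Fin.last k) : ℕ) v with h | h
      exacts [Or.inl ⟨h, juxtAv_of_avoids hav⟩, Or.inr ⟨h, hav⟩]
  · rintro (⟨hlt, c, hc, hpre, hsuf⟩ | ⟨-, hav⟩)
    · rcases hc.lt_or_eq with hck | rfl
      · rw [not_containsIn_p21_iff] at hsuf
        exact ⟨c, by omega, (containsIn_appendLast_iff hc).not.2 hpre,
          not_containsIn_p21_iff.2 ((increasingFrom_appendLast_iff (by omega)).2 ⟨hsuf, hlt⟩)⟩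
      · exact juxtAv_appendLast_of_avoids (avoids_iff_not_containsIn_lt.2 hpre)
    · exact juxtAv_appendLast_of_avoids hav

end Juxtaposition

section Thresholds

variable {k : ℕ}

def AscentBottomsLt (w : Perm (Fin k)) (m : ℕ) : Prop :=
  ∀ i j, i < j → w i < w j → (w i : ℕ) < m

def InversionBottomsLt (w : Perm (Fin k)) (m : ℕ) : Prop :=
  ∀ i j, i < j → w j < w i → (w j : ℕ) < m

lemma InversionBottomsLt.mono {w : Perm (Fin k)} {m m' : ℕ} (h : InversionBottomsLt w m)
    (hm : m ≤ m') : InversionBottomsLt w m' :=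
  fun i j hij hlt => (h i j hij hlt).trans_le hm

lemma inversionBottomsLt_of_le (w : Perm (Fin k)) {m : ℕ} (hm : k ≤ m) :
    InversionBottomsLt w m :=
  fun _ j _ _ => (w j).isLt.trans_le hm

lemma avoids_appendLast_p231_iff {w : Perm (Fin k)} {v : Fin (k + 1)} :
    Avoids (appendLast w v) p231 ↔ Avoids w p231 ∧ AscentBottomsLt w v := by
  simp only [Avoids, contains_p231_iff, exists_lt_lt_fin_succ_iff (R := fun a b c => _ < _ ∧ _),
    appendLast_castSucc, appendLast_last, Fin.succAbove_lt_succAbove_iff,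
    Fin.lt_succAbove_iff_le_castSucc, Fin.le_def, Fin.val_castSucc, not_or, AscentBottomsLt,
    not_exists, not_and]
  exact and_congr_right' <| forall₂_congr fun _ _ => forall_congr' fun _ => by
    rw [imp_not_comm, not_le]

lemma avoids_appendLast_p321_iff {w : Perm (Fin k)} {v : Fin (k + 1)} :
    Avoids (appendLast w v) p321 ↔ Avoids w p321 ∧ InversionBottomsLt w v := by
  simp only [Avoids, contains_p321_iff, exists_lt_lt_fin_succ_iff (R := fun a b c => _ < _ ∧ _),
    appendLast_castSucc, appendLast_last, Fin.succAbove_lt_succAbove_iff,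
    Fin.lt_succAbove_iff_le_castSucc, Fin.le_def, Fin.val_castSucc, not_or, InversionBottomsLt,
    not_exists, not_and, not_le]

lemma ascentBottomsLt_appendLast_iff {w : Perm (Fin k)} {v : Fin (k + 1)} {m : ℕ}
    (hw : AscentBottomsLt w v) : AscentBottomsLt (appendLast w v) m ↔ (v : ℕ) ≤ m := by
  constructor
  · intro h
    by_contra! hmv
    obtain ⟨i, hi, hiv⟩ := exists_lt_last_appendLast_eq (w := w) (v := v)
      (u := ⟨m, by omega⟩) (Fin.ne_of_val_ne hmv.ne)
    have := h i (Fin.last k) hi (by rw [hiv, appendLast_last, Fin.lt_def]; exact hmv)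
    simp [hiv] at this
  · intro hv i j hij hσ
    suffices appendLast w v i < v from (Fin.lt_def.1 this).trans_le hv
    obtain ⟨i, rfl⟩ := Fin.exists_castSucc_eq.2 (Fin.ne_last_of_lt hij)
    obtain ⟨j, rfl⟩ | rfl := Fin.eq_castSucc_or_eq_last j
    · simp only [appendLast_castSucc, Fin.succAbove_lt_succAbove_iff,
        Fin.castSucc_lt_castSucc_iff] at hij hσ ⊢
      rw [Fin.succAbove_lt_iff_castSucc_lt, Fin.lt_def]
      exact hw i j hij hσ
    · simpa using hσ

lemma inversionBottomsLt_appendLast_iff {w : Perm (Fin k)} {v : Fin (k + 1)} {m : ℕ}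
    (hw : InversionBottomsLt w v) :
    InversionBottomsLt (appendLast w v) m ↔
      InversionBottomsLt w m ∧ ((v : ℕ) < k → (v : ℕ) < m) := by
  have hval : ∀ i j, i < j → w j < w i → (v.succAbove (w j) : ℕ) = w j :=
    fun i j hij hlt => by
      rw [Fin.succAbove_of_castSucc_lt _ _ (Fin.lt_def.2 (hw i j hij hlt)), Fin.val_castSucc]
  constructor
  · intro h
    refine ⟨fun i j hij hlt => ?_, fun hvk => ?_⟩
    · rw [← hval i j hij hlt]
      simpa using h i.castSucc j.castSucc (by simpa) (by simpa)
    · obtain ⟨i, hi, hiv⟩ := exists_lt_last_appendLast_eq (w := w) (v := v)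
        (u := ⟨v + 1, by omega⟩) (Fin.ne_of_val_ne (by simp))
      simpa using h i (Fin.last k) hi (by rw [hiv, appendLast_last, Fin.lt_def]; simp)
  · rintro ⟨h1, h2⟩ i j hij hσ
    obtain ⟨i, rfl⟩ := Fin.exists_castSucc_eq.2 (Fin.ne_last_of_lt hij)
    obtain ⟨j, rfl⟩ | rfl := Fin.eq_castSucc_or_eq_last j
    · simp only [appendLast_castSucc, Fin.succAbove_lt_succAbove_iff,
        Fin.castSucc_lt_castSucc_iff] at hij hσ ⊢
      rw [hval i j hij hσ]
      exact h1 i j hij hσ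
    · rw [appendLast_last] at hσ ⊢
      have := (v.succAbove (w i)).isLt
      exact h2 (by rw [Fin.lt_def] at hσ; omega)

end Thresholds

noncomputable def card231AscLt (k m : ℕ) : ℕ :=
  Nat.card {w : Perm (Fin k) // Avoids w p231 ∧ AscentBottomsLt w m}

noncomputable def card321InvLt (k m : ℕ) : ℕ :=
  Nat.card {w : Perm (Fin k) // Avoids w p321 ∧ InversionBottomsLt w m}

lemma card231AscLt_succ (k m : ℕ) :
    card231AscLt (k + 1) m = ∑ v ∈ range (k + 1), if v ≤ m then card231AscLt k v else 0 := by
  rw [card231AscLt, card_subtype_perm_succ,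
    ← Fin.sum_univ_eq_sum_range (fun v => if v ≤ m then card231AscLt k v else 0)]
  refine sum_congr rfl fun v _ => ?_
  have hpred : ∀ w : Perm (Fin k),
      Avoids (appendLast w v) p231 ∧ AscentBottomsLt (appendLast w v) m ↔
        (Avoids w p231 ∧ AscentBottomsLt w v) ∧ (v : ℕ) ≤ m := fun w => by
    rw [avoids_appendLast_p231_iff]
    exact and_congr_right fun h => ascentBottomsLt_appendLast_iff h.2
  rw [Nat.card_congr (Equiv.subtypeEquivRight hpred)]
  split_ifs with h <;> simp [h, card231AscLt]

lemma card321InvLt_succ (k m : ℕ) :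
    card321InvLt (k + 1) m =
      card321InvLt k m + ∑ v ∈ range k, if v < m then card321InvLt k v else 0 := by
  rw [card321InvLt, card_subtype_perm_succ, Fin.sum_univ_castSucc, add_comm,
    ← Fin.sum_univ_eq_sum_range (fun v => if v < m then card321InvLt k v else 0)]
  congr 1
  · refine Nat.card_congr (Equiv.subtypeEquivRight fun w => ?_)
    rw [avoids_appendLast_p321_iff, and_assoc,
      inversionBottomsLt_appendLast_iff (inversionBottomsLt_of_le w (by simp))]
    simp [inversionBottomsLt_of_le w]
  · refine sum_congr rfl fun v _ => ?_
    have hpred : ∀ w : Perm (Fin k),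
        Avoids (appendLast w v.castSucc) p321 ∧
            InversionBottomsLt (appendLast w v.castSucc) m ↔
          (Avoids w p321 ∧ InversionBottomsLt w v) ∧ (v : ℕ) < m := fun w => by
      rw [avoids_appendLast_p321_iff]
      refine and_congr_right fun h => (inversionBottomsLt_appendLast_iff h.2).trans ?_
      simp only [Fin.val_castSucc, v.isLt, forall_const]
      exact ⟨And.right, fun hvm => ⟨h.2.mono hvm.le, hvm⟩⟩
    rw [Nat.card_congr (Equiv.subtypeEquivRight hpred)]
    split_ifs with h <;> simp [h, card321InvLt]

lemma card321InvLt_of_le {k m : ℕ} (hkm : k ≤ m) : card321InvLt k m = card321InvLt k k :=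
  Nat.card_congr (Equiv.subtypeEquivRight fun w => and_congr_right fun _ =>
    iff_of_true (inversionBottomsLt_of_le w hkm) (inversionBottomsLt_of_le w le_rfl))

lemma card231AscLt_eq_card321InvLt (k m : ℕ) : card231AscLt k m = card321InvLt k m := by
  induction k generalizing m with
  | zero =>
    refine Nat.card_congr (Equiv.subtypeEquivRight fun w => iff_of_true ?_ ?_) <;>
      exact ⟨avoids_of_lt (by decide), fun i => i.elim0⟩
  | succ k ih =>
    rw [card231AscLt_succ, card321InvLt_succ, funext ih]
    exact sum_range_succ_ite_le card321InvLt_of_le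

lemma card_avoids_p231_last_eq {k : ℕ} (v : Fin (k + 1)) :
    Nat.card {σ : Perm (Fin (k + 1)) // Avoids σ p231 ∧ σ (Fin.last k) = v} =
      card231AscLt k v := by
  rw [card_subtype_perm_last_eq]
  exact Nat.card_congr (Equiv.subtypeEquivRight fun _ => avoids_appendLast_p231_iff)

lemma card_avoids_p321_last_eq {k : ℕ} (v : Fin (k + 1)) :
    Nat.card {σ : Perm (Fin (k + 1)) // Avoids σ p321 ∧ σ (Fin.last k) = v} =
      card321InvLt k v := by
  rw [card_subtype_perm_last_eq]
  exact Nat.card_congr (Equiv.subtypeEquivRight fun _ => avoids_appendLast_p321_iff)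

lemma card_juxtAv_last_succ {k p : ℕ} (P : Perm (Fin p)) (v : Fin (k + 2)) :
    Nat.card {σ : Perm (Fin (k + 2)) // JuxtAv P p21 σ ∧ σ (Fin.last (k + 1)) = v} =
      ∑ t : Fin (k + 1), if (t : ℕ) < v
        then Nat.card {w : Perm (Fin (k + 1)) // JuxtAv P p21 w ∧ w (Fin.last k) = t}
        else Nat.card {w : Perm (Fin (k + 1)) // Avoids w P ∧ w (Fin.last k) = t} := by
  rw [card_subtype_perm_last_eq, Nat.card_subtype_eq_sum_card_fiber _ (· (Fin.last k))]
  refine sum_congr rfl fun t _ => ?_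
  split_ifs with h <;>
    refine Nat.card_congr (Equiv.subtypeEquivRight fun w => and_congr_left fun hw => ?_) <;>
    rw [juxtAv_appendLast_iff, hw]
  · simp [h, h.not_ge]
  · simp [h, not_lt.1 h]

lemma card_juxtAv_p231_last_eq_p321 (k : ℕ) (v : Fin (k + 1)) :
    Nat.card {σ : Perm (Fin (k + 1)) // JuxtAv p231 p21 σ ∧ σ (Fin.last k) = v} =
      Nat.card {σ : Perm (Fin (k + 1)) // JuxtAv p321 p21 σ ∧ σ (Fin.last k) = v} := by
  induction k with
  | zero =>
    exact Nat.card_congr (Equiv.subtypeEquivRight fun σ => and_congr_left fun _ =>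
      iff_of_true (juxtAv_of_lt (by decide)) (juxtAv_of_lt (by decide)))
  | succ k ih =>
    rw [card_juxtAv_last_succ, card_juxtAv_last_succ]
    refine sum_congr rfl fun t _ => ?_
    rw [ih, card_avoids_p231_last_eq, card_avoids_p321_last_eq, card231AscLt_eq_card321InvLt]

theorem stmt (n : ℕ) :
    Nat.card {σ : Equiv.Perm (Fin n) // JuxtAv p231 p21 σ}
      = Nat.card {σ : Equiv.Perm (Fin n) // JuxtAv p321 p21 σ} := by
  cases n with
  | zero =>
    exact Nat.card_congr (Equiv.subtypeEquivRight fun σ =>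
      iff_of_true (juxtAv_of_lt (by decide)) (juxtAv_of_lt (by decide)))
  | succ k =>
    rw [Nat.card_subtype_eq_sum_card_fiber _ (· (Fin.last k)),
      Nat.card_subtype_eq_sum_card_fiber _ (· (Fin.last k))]
    exact sum_congr rfl fun v _ => card_juxtAv_p231_last_eq_p321 k v
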